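/- arXiv:1811.08205 — 3 statements merged into one kernel-verified Lean document; each statement's English description precedes it below -/
import Mathlib

section
/- For any n and t with t ≤ n/2, there exists a family F of t-element subsets of {1,...,n} with |F| ≥ (n/(4t))^(t/4) such that any two distinct sets S, S' in F satisfy |S ∩ S'| < t/2. -/
/-!
A greedy packing replaces the random family. Let `F` be a maximal family of `t`-subsets of `[n]`
with pairwise intersections of size below `t/2`. By maximality every `t`-subset meets some member
of `F` in at least `k = ⌈t/2⌉` points, while a fixed `t`-set is met that much by at most
`C(t,k) C(n-k,t-k)` of the `t`-subsets. Hence `C(n,t) ≤ |F| C(t,k) C(n-k,t-k)`; together with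
`C(n,t) / C(n-k,t-k) ≥ (n/t)^k` and `C(t,k) ≤ 2^t ≤ 4^k` this gives `|F| ≥ (n/4t)^k`, which
is at least `(n/4t)^(t/4)` once `n ≥ 4t`. For `n < 4t` the bound is at most `1 ≤ |F|`.
-/

open Finset

namespace Nat

theorem mul_choose_le_mul_succ_choose_succ {n t m s : ℕ} (h : n * (s + 1) ≤ (m + 1) * t) :
    n * m.choose s ≤ t * (m + 1).choose (s + 1) := by
  refine Nat.le_of_mul_le_mul_right ?_ s.succ_pos
  calc n * m.choose s * (s + 1) = n * (s + 1) * m.choose s := by ring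
    _ ≤ (m + 1) * t * m.choose s := Nat.mul_le_mul_right _ h
    _ = t * ((m + 1) * m.choose s) := by ring
    _ = t * (m + 1).choose (s + 1) * (s + 1) := by rw [add_one_mul_choose_eq]; ring

theorem pow_mul_choose_sub_le {n t j : ℕ} (hjt : j ≤ t) (htn : t ≤ n) :
    n ^ j * (n - j).choose (t - j) ≤ t ^ j * n.choose t := by
  induction j with
  | zero => simp
  | succ j ih =>
    have hn : n - (j + 1) + 1 = n - j := by omega
    have ht : t - (j + 1) + 1 = t - j := by omega
    have hstep : n * (n - (j + 1)).choose (t - (j + 1)) ≤ t * (n - j).choose (t - j) := by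
      have := mul_choose_le_mul_succ_choose_succ (n := n) (t := t) (m := n - (j + 1))
        (s := t - (j + 1))
      rw [hn, ht] at this
      refine this ?_
      zify [(by omega : j ≤ n), (by omega : j ≤ t)]
      nlinarith
    calc n ^ (j + 1) * (n - (j + 1)).choose (t - (j + 1))
        = n ^ j * (n * (n - (j + 1)).choose (t - (j + 1))) := by ring
      _ ≤ n ^ j * (t * (n - j).choose (t - j)) := Nat.mul_le_mul_left _ hstep
      _ = t * (n ^ j * (n - j).choose (t - j)) := by ring
      _ ≤ t * (t ^ j * n.choose t) := Nat.mul_le_mul_left _ (ih (by omega))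
      _ = t ^ (j + 1) * n.choose t := by ring

theorem choose_le_four_pow_of_le_two_mul {t k : ℕ} (htk : t ≤ 2 * k) : t.choose k ≤ 4 ^ k :=
  (choose_le_two_pow t k).trans <| by
    rw [show 4 = 2 ^ 2 by rfl, ← pow_mul]
    exact Nat.pow_le_pow_right two_pos htk

end Nat

namespace Finset

variable {α : Type*} [DecidableEq α]

theorem exists_maximal_pairwise_subset (s : Finset α) (r : α → α → Prop) [Std.Symm r] :
    ∃ F ⊆ s, (F : Set α).Pairwise r ∧ ∀ a ∈ s, a ∉ F → ∃ b ∈ F, ¬ r a b := by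
  classical
  set 𝒢 := s.powerset.filter fun F : Finset α => (F : Set α).Pairwise r
  obtain ⟨F, hF, hmax⟩ := 𝒢.exists_max_image card ⟨∅, by simp [𝒢]⟩
  rw [mem_filter, mem_powerset] at hF
  refine ⟨F, hF.1, hF.2, fun a ha haF => ?_⟩
  by_contra! h
  have hins : insert a F ∈ 𝒢 := by
    rw [mem_filter, mem_powerset, coe_insert]
    exact ⟨insert_subset ha hF.1, hF.2.insert_of_symm fun b hb _ => h b hb⟩
  have := hmax _ hins
  rw [card_insert_of_notMem haF] at this
  omega

variable [Fintype α]

theorem card_filter_le_card_inter_le (S : Finset α) {k t : ℕ} (hkt : k ≤ t) :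
    #{T ∈ powersetCard t (univ : Finset α) | k ≤ #(S ∩ T)} ≤
      (#S).choose k * (Fintype.card α - k).choose (t - k) := by
  have hsub : {T ∈ powersetCard t (univ : Finset α) | k ≤ #(S ∩ T)} ⊆
      (S.powersetCard k).biUnion fun A => {T ∈ powersetCard t univ | A ⊆ T} := by
    intro T hT
    obtain ⟨A, hA, hAk⟩ := exists_subset_card_eq (mem_filter.1 hT).2
    exact mem_biUnion.2 ⟨A, mem_powersetCard.2 ⟨hA.trans inter_subset_left, hAk⟩,
      mem_filter.2 ⟨(mem_filter.1 hT).1, hA.trans inter_subset_right⟩⟩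
  refine (card_le_card hsub).trans ?_
  rw [← card_powersetCard k S]
  refine card_biUnion_le_card_mul _ _ _ fun A hA => ?_
  obtain ⟨-, hAk⟩ := mem_powersetCard.1 hA
  rw [card_filter_powersetCard_subset _ _ _ (subset_univ A) (hAk ▸ hkt), card_univ, hAk]

theorem choose_le_card_mul_of_forall_exists_le_card_inter {F : Finset (Finset α)} {k t : ℕ}
    (hkt : k ≤ t) (hFt : ∀ S ∈ F, #S = t)
    (hF : ∀ T : Finset α, #T = t → ∃ S ∈ F, k ≤ #(S ∩ T)) :
    (Fintype.card α).choose t ≤ #F * (t.choose k * (Fintype.card α - k).choose (t - k)) := by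
  have hsub : powersetCard t (univ : Finset α) ⊆
      F.biUnion fun S => {T ∈ powersetCard t univ | k ≤ #(S ∩ T)} := by
    intro T hT
    obtain ⟨S, hS, hST⟩ := hF T (mem_powersetCard.1 hT).2
    exact mem_biUnion.2 ⟨S, hS, mem_filter.2 ⟨hT, hST⟩⟩
  rw [← card_univ, ← card_powersetCard t (univ : Finset α)]
  refine (card_le_card hsub).trans (card_biUnion_le_card_mul _ _ _ fun S hS => ?_)
  simpa only [hFt S hS, card_univ] using card_filter_le_card_inter_le S hkt

variable (α) in
theorem exists_pairwise_two_mul_card_inter_lt {t : ℕ} (htn : t ≤ Fintype.card α) :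
    ∃ F : Finset (Finset α), (∀ S ∈ F, #S = t) ∧
      (∀ S ∈ F, ∀ S' ∈ F, S ≠ S' → 2 * #(S ∩ S') < t) ∧ 0 < #F ∧
      Fintype.card α ^ ((t + 1) / 2) ≤ (4 * t) ^ ((t + 1) / 2) * #F := by
  set n := Fintype.card α
  set k := (t + 1) / 2
  have : Std.Symm fun S T : Finset α => 2 * #(S ∩ T) < t :=
    ⟨fun S T h => by rwa [inter_comm]⟩
  obtain ⟨F, hFsub, hFpair, hFmax⟩ :=
    exists_maximal_pairwise_subset (powersetCard t univ) fun S T : Finset α => 2 * #(S ∩ T) < t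
  have hFt : ∀ S ∈ F, #S = t := fun S hS => (mem_powersetCard.1 (hFsub hS)).2
  have hcover : ∀ T : Finset α, #T = t → ∃ S ∈ F, k ≤ #(S ∩ T) := by
    intro T hT
    by_cases hTF : T ∈ F
    · exact ⟨T, hTF, by rw [inter_self, hT]; omega⟩
    · obtain ⟨S, hS, hST⟩ := hFmax T (mem_powersetCard.2 ⟨subset_univ T, hT⟩) hTF
      exact ⟨S, hS, by rw [inter_comm]; omega⟩
  have hcount := choose_le_card_mul_of_forall_exists_le_card_inter (by omega) hFt hcover
  refine ⟨F, hFt, fun S hS S' hS' h => hFpair hS hS' h, ?_, ?_⟩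
  · exact Nat.pos_of_mul_pos_right ((Nat.choose_pos htn).trans_le hcount)
  · refine Nat.le_of_mul_le_mul_right ?_ (Nat.choose_pos (Nat.sub_le_sub_right htn k))
    calc n ^ k * (n - k).choose (t - k) ≤ t ^ k * n.choose t :=
          Nat.pow_mul_choose_sub_le (by omega) htn
      _ ≤ t ^ k * (#F * (t.choose k * (n - k).choose (t - k))) := by gcongr
      _ ≤ t ^ k * (#F * (4 ^ k * (n - k).choose (t - k))) := by
          gcongr
          exact Nat.choose_le_four_pow_of_le_two_mul (by omega)
      _ = (4 * t) ^ k * #F * (n - k).choose (t - k) := by ring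

end Finset

theorem stmt_0_general (n t : ℕ) (htn : 2 * t ≤ n) :
    ∃ F : Finset (Finset (Fin n)),
      (∀ S ∈ F, S.card = t) ∧
      ((n : ℝ) / (4 * t)) ^ ((t : ℝ) / 4) ≤ (F.card : ℝ) ∧
      (∀ S ∈ F, ∀ S' ∈ F, S ≠ S' → 2 * (S ∩ S').card < t) := by
  obtain ⟨F, hFt, hFpair, hFpos, hFbound⟩ :=
    exists_pairwise_two_mul_card_inter_lt (Fin n) (t := t) (by rw [Fintype.card_fin]; omega)
  rw [Fintype.card_fin] at hFbound
  refine ⟨F, hFt, ?_, hFpair⟩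
  rcases le_total ((n : ℝ) / (4 * t)) 1 with hx | hx
  · calc ((n : ℝ) / (4 * t)) ^ ((t : ℝ) / 4) ≤ 1 :=
          Real.rpow_le_one (by positivity) hx (by positivity)
      _ ≤ F.card := by exact_mod_cast hFpos
  · have ht : t ≠ 0 := by rintro rfl; norm_num at hx
    have hk : (t : ℝ) / 4 ≤ ((t + 1) / 2 : ℕ) := by
      have : t ≤ 2 * ((t + 1) / 2) := by omega
      have : (t : ℝ) ≤ 2 * ((t + 1) / 2 : ℕ) := by exact_mod_cast this
      linarith
    calc ((n : ℝ) / (4 * t)) ^ ((t : ℝ) / 4)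
        ≤ ((n : ℝ) / (4 * t)) ^ (((t + 1) / 2 : ℕ) : ℝ) :=
          Real.rpow_le_rpow_of_exponent_le hx hk
      _ = (n : ℝ) ^ ((t + 1) / 2) / (4 * t) ^ ((t + 1) / 2) := by
          rw [Real.rpow_natCast, div_pow]
      _ ≤ F.card := by
        rw [div_le_iff₀ (by positivity), mul_comm]
        exact_mod_cast hFbound

/-- There exists a family `F` of `t`-element subsets of `[n]` of size at least
`(n/(4t))^(t/4)` such that any two distinct members intersect in fewer than `t/2` elements. -/
theorem stmt_0 (n t : ℕ) (ht : 0 < t) (htn : 2 * t ≤ n) :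
    ∃ F : Finset (Finset (Fin n)),
      (∀ S ∈ F, S.card = t) ∧
      ((n : ℝ) / (4 * t)) ^ ((t : ℝ) / 4) ≤ (F.card : ℝ) ∧
      (∀ S ∈ F, ∀ S' ∈ F, S ≠ S' → 2 * (S ∩ S').card < t) :=
  stmt_0_general n t htn
end

section
/- For every positive integer t and every δ ∈ (0,1), setting q = 2 + log₂(1/δ)/√t and C = ⌈4√t · q / log₂ q⌉, one has (e·t/C²)^C < δ. -/
/-!
Write `g = log₂ q`. The ceiling gives `C·g ≥ 4√t·q`; since `log₂ q < 2√q` (from `log x ≤ x/e`),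
squaring yields `C² ≥ 4tq ≥ e·t·q`, hence `(e·t/C²)^C ≤ q^(-C)`. Finally
`C·log₂ q ≥ 4√t·q > √t·(q - 2) = log₂(1/δ)`, i.e. `q^C > 1/δ`.
-/

open Real

namespace Real

theorem log_le_div_exp_one {x : ℝ} (hx : 0 < x) : log x ≤ x / exp 1 := by
  have h := log_le_sub_one_of_pos (div_pos hx (exp_pos 1))
  rw [log_div hx.ne' (exp_pos 1).ne', log_exp] at h
  linarith

theorem logb_two_lt_two_mul_sqrt {q : ℝ} (hq : 0 < q) : logb 2 q < 2 * √q := by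
  have hsqrt : 0 < √q := sqrt_pos.mpr hq
  have hlog : log q ≤ 2 * √q / exp 1 := by
    have := log_le_div_exp_one hsqrt
    rw [log_sqrt hq.le] at this
    rw [mul_div_assoc]
    linarith
  have he : 1 < exp 1 * log 2 := by nlinarith [exp_one_gt_d9, log_two_gt_d9]
  rw [logb, div_lt_iff₀ (log_pos one_lt_two)]
  calc log q ≤ 2 * √q / exp 1 := hlog
    _ < 2 * √q / exp 1 * (exp 1 * log 2) := lt_mul_of_one_lt_right (by positivity) he
    _ = 2 * √q * log 2 := by field_simp

end Real

theorem four_mul_sq_mul_le_sq_of_le_mul_logb_two {s q C : ℝ} (hs : 0 ≤ s) (hq : 1 ≤ q)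
    (h : 4 * s * q ≤ C * logb 2 q) : 4 * s ^ 2 * q ≤ C ^ 2 := by
  have hg : 0 ≤ logb 2 q := logb_nonneg one_lt_two hq
  have hsqrt : √q ^ 2 = q := sq_sqrt (by linarith)
  have hlt := logb_two_lt_two_mul_sqrt (by linarith : 0 < q)
  have h2 : 2 * s * √q ≤ |C| := by
    have : 4 * s * q ≤ |C| * (2 * √q) := by
      calc 4 * s * q ≤ C * logb 2 q := h
        _ ≤ |C| * logb 2 q := by gcongr; exact le_abs_self C
        _ ≤ |C| * (2 * √q) := by gcongr
    nlinarith [sqrt_pos.mpr (by linarith : 0 < q)]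
  have := pow_le_pow_left₀ (by positivity) h2 2
  rw [sq_abs, mul_pow, mul_pow, hsqrt] at this
  linarith

theorem div_sq_pow_lt_of_logb_lt {a q δ : ℝ} {C : ℕ} (ha : 0 ≤ a) (hq : 0 < q) (hδ : 0 < δ)
    (haq : a * q ≤ C ^ 2) (hL : logb 2 (1 / δ) < C * logb 2 q) : (a / C ^ 2) ^ C < δ := by
  have hqC : 0 < q ^ C := pow_pos hq C
  calc (a / C ^ 2) ^ C ≤ q⁻¹ ^ C := by
        gcongr
        exact div_le_of_le_mul₀ (by positivity) (by positivity) (by field_simp; linarith)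
    _ = (q ^ C)⁻¹ := inv_pow q C
    _ < δ := by
        rw [inv_lt_comm₀ hqC hδ, ← one_div, ← logb_lt_logb_iff one_lt_two (by positivity) hqC,
          logb_pow]
        exact hL

/-- For `q = 2 + log₂(1/δ)/√t` and `C = ⌈4√t·q/log₂ q⌉`, one has `(e·t/C²)^C < δ`. -/
theorem stmt_6 (t : ℕ) (ht : 0 < t) (δ : ℝ) (hδ0 : 0 < δ) (hδ1 : δ < 1) :
    (Real.exp 1 * t /
        ((⌈4 * Real.sqrt t * (2 + Real.logb 2 (1 / δ) / Real.sqrt t) /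
            Real.logb 2 (2 + Real.logb 2 (1 / δ) / Real.sqrt t)⌉₊ : ℝ) ^ 2)) ^
      (⌈4 * Real.sqrt t * (2 + Real.logb 2 (1 / δ) / Real.sqrt t) /
          Real.logb 2 (2 + Real.logb 2 (1 / δ) / Real.sqrt t)⌉₊)
      < δ := by
  set s := √(t : ℝ)
  set L := logb 2 (1 / δ)
  set q := 2 + L / s
  set C := ⌈4 * s * q / logb 2 q⌉₊
  have hs : 0 < s := sqrt_pos.mpr (by exact_mod_cast ht)
  have hL : 0 < L := logb_pos one_lt_two (by rw [lt_div_iff₀ hδ0]; linarith)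
  have hq : 2 < q := lt_add_of_pos_right 2 (div_pos hL hs)
  have hg : 0 < logb 2 q := logb_pos one_lt_two (by linarith)
  have hCg : 4 * s * q ≤ C * logb 2 q := (div_le_iff₀ hg).mp (Nat.le_ceil _)
  have hCsq : exp 1 * t * q ≤ C ^ 2 :=
    calc exp 1 * t * q ≤ 4 * s ^ 2 * q := by
          rw [sq_sqrt (Nat.cast_nonneg t)]
          gcongr
          linarith [exp_one_lt_d9]
      _ ≤ C ^ 2 := four_mul_sq_mul_le_sq_of_le_mul_logb_two hs.le (by linarith) hCg
  have hLC : L < C * logb 2 q :=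
    calc L = (2 + L / s - 2) * s := by rw [add_sub_cancel_left, div_mul_cancel₀ _ hs.ne']
      _ < 4 * s * q := by nlinarith
      _ ≤ C * logb 2 q := hCg
  exact div_sq_pow_lt_of_logb_lt (by positivity) (by linarith) hδ0 (by linarith) hLC
end

section
/- The Misra–Gries algorithm with capacity C, run on a stream of N items, maintains a list L of at most C items with counters A(u) > 0 for u ∈ L such that at the end, for every item u: 0 ≤ f(u) − A(u) ≤ N/(C+1), where f(u) is the true frequency of u and A(u) = 0 for u ∉ L. -/
/-- One step of the Misra–Gries algorithm with capacity `C`: increment the counter of the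
arriving item; if more than `C` counters are then positive, decrement all counters by one. -/
def mgStep {α : Type*} [Fintype α] [DecidableEq α] (C : ℕ) (A : α → ℕ) (u : α) : α → ℕ :=
  let A' := Function.update A u (A u + 1)
  if (Finset.univ.filter fun x => 0 < A' x).card ≤ C then A' else fun x => A' x - 1

/-! A counter is lowered only in a decrement round, and only by one, while such a round lowers
the total of all counters by more than `C`, since more than `C` counters are positive. As every
arrival raises the total by one, `(C + 1) * (f u - A u) + ∑ x, A x ≤ N` is invariant. After a
decrement the positive counters are among those positive before the arrival, so there are never
more than `C`. -/

open Finset Function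

lemma update_succ_apply {α : Type*} [DecidableEq α] (A : α → ℕ) (u v : α) :
    update A u (A u + 1) v = A v + if u = v then 1 else 0 := by
  rcases eq_or_ne v u with rfl | h
  · simp
  · simp [h, h.symm]

section
variable {α : Type*} [Fintype α]

lemma sum_tsub_one_add_card_pos (A : α → ℕ) :
    ∑ x, (A x - 1) + #{x | 0 < A x} = ∑ x, A x := by
  rw [card_filter, ← sum_add_distrib]
  exact sum_congr rfl fun x _ => by split_ifs <;> omega

variable [DecidableEq α]

lemma sum_update_succ (A : α → ℕ) (u : α) :
    ∑ x, update A u (A u + 1) x = ∑ x, A x + 1 := by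
  simp only [update_succ_apply, sum_add_distrib, sum_ite_eq, mem_univ, if_true]

lemma filter_pos_update_succ_tsub_one_subset (A : α → ℕ) (u : α) :
    filter (fun x => 0 < update A u (A u + 1) x - 1) univ ⊆ filter (fun x => 0 < A x) univ := by
  intro x
  simp only [mem_filter, mem_univ, true_and, update_succ_apply]
  split_ifs <;> omega

lemma mgStep_le_update (C : ℕ) (A : α → ℕ) (u v : α) :
    mgStep C A u v ≤ update A u (A u + 1) v := by
  unfold mgStep
  split_ifs
  · exact le_rfl
  · exact Nat.sub_le _ _

lemma card_pos_mgStep_le (C : ℕ) {A : α → ℕ} (hA : #{x | 0 < A x} ≤ C) (u : α) :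
    #{x | 0 < mgStep C A u x} ≤ C := by
  unfold mgStep
  split_ifs with h
  · exact h
  · exact (card_le_card (filter_pos_update_succ_tsub_one_subset A u)).trans hA

lemma mgStep_potential (C : ℕ) (A : α → ℕ) (u v : α) :
    (C + 1) * update A u (A u + 1) v + ∑ x, mgStep C A u x
      ≤ ∑ x, A x + 1 + (C + 1) * mgStep C A u v := by
  rw [← sum_update_succ]
  unfold mgStep
  set A' := update A u (A u + 1)
  split_ifs with h
  · omega
  · have hsum := sum_tsub_one_add_card_pos A'
    have hv : A' v ≤ (A' v - 1) + 1 := by omega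
    have hcard := not_le.mp h
    nlinarith

lemma card_pos_foldl_mgStep_le (C : ℕ) (s : List α) {A : α → ℕ}
    (hA : #{x | 0 < A x} ≤ C) :
    #{x | 0 < s.foldl (mgStep C) A x} ≤ C := by
  induction s generalizing A with
  | nil => exact hA
  | cons u t ih => exact ih (card_pos_mgStep_le C hA u)

lemma foldl_mgStep_le (C : ℕ) (s : List α) (A : α → ℕ) (v : α) :
    s.foldl (mgStep C) A v ≤ A v + s.count v := by
  induction s generalizing A with
  | nil => simp
  | cons u t ih =>
    have hstep := mgStep_le_update C A u v
    rw [update_succ_apply] at hstep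
    simp only [List.foldl_cons, List.count_cons, beq_iff_eq]
    linarith [ih (mgStep C A u)]

lemma foldl_mgStep_potential (C : ℕ) (s : List α) (A : α → ℕ) (v : α) :
    (C + 1) * (A v + s.count v) + ∑ x, s.foldl (mgStep C) A x
      ≤ ∑ x, A x + s.length + (C + 1) * s.foldl (mgStep C) A v := by
  induction s generalizing A with
  | nil => simp [add_comm]
  | cons u t ih =>
    have hstep := mgStep_potential C A u v
    rw [update_succ_apply] at hstep
    simp only [List.foldl_cons, List.count_cons, beq_iff_eq, List.length_cons]
    linarith [ih (mgStep C A u)]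

end

theorem stmt_10_general {α : Type*} [Fintype α] [DecidableEq α] (C : ℕ)
    (s : List α) :
    (Finset.univ.filter fun x => 0 < s.foldl (mgStep C) (fun _ => 0) x).card ≤ C ∧
    ∀ u : α, s.foldl (mgStep C) (fun _ => 0) u ≤ s.count u ∧
      ((s.count u : ℝ) - s.foldl (mgStep C) (fun _ => 0) u)
        ≤ (s.length : ℝ) / (C + 1) := by
  refine ⟨card_pos_foldl_mgStep_le C s (by simp), fun u => ⟨?_, ?_⟩⟩
  · simpa using foldl_mgStep_le C s (fun _ => 0) u
  · have h := foldl_mgStep_potential C s (fun _ => 0) u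
    simp only [zero_add, sum_const_zero] at h
    rw [le_div_iff₀ (by positivity)]
    have h' : ((C + 1) * s.count u : ℝ)
        ≤ s.length + (C + 1) * s.foldl (mgStep C) (fun _ => 0) u := by
      exact_mod_cast (Nat.le_add_right _ _).trans h
    linarith

/-- The Misra–Gries algorithm with capacity `C` on a stream of `N` items maintains at most
`C` positive counters, and every item `u` satisfies `0 ≤ f(u) − A(u) ≤ N/(C+1)`. -/
theorem stmt_10 {α : Type*} [Fintype α] [DecidableEq α] (C : ℕ) (hC : 0 < C)
    (s : List α) :
    (Finset.univ.filter fun x => 0 < s.foldl (mgStep C) (fun _ => 0) x).card ≤ C ∧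
    ∀ u : α, s.foldl (mgStep C) (fun _ => 0) u ≤ s.count u ∧
      ((s.count u : ℝ) - s.foldl (mgStep C) (fun _ => 0) u)
        ≤ (s.length : ℝ) / (C + 1) :=
  stmt_10_general C s
end
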